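/- arXiv:1507.02615 — 6 statements merged into one kernel-verified Lean document; each statement's English description precedes it below -/
import Mathlib

section
/- For any p' > p > 1, V(p) − V(p') < ln(p/(p−1)) − ln(p'/(p'−1)), where V(p) = p·ln(p²/(p²−1)). -/
/-!
The function `p ↦ V p - log (p / (p - 1))` is strictly increasing on `(1, ∞)`. Its derivative is
`log (p² / (p² - 1)) - 1 / (p (p + 1))`, and `log (p² / (p² - 1)) = -log (1 - 1 / p²) > 1 / p²`
by `log y < y - 1`, while `1 / p² > 1 / (p (p + 1))`.
-/

open Real Set

noncomputable def V (p : ℝ) : ℝ := p * Real.log (p ^ 2 / (p ^ 2 - 1))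

lemma hasDerivAt_V {x : ℝ} (hx : x ≠ 0) (hx2 : x ^ 2 ≠ 1) :
    HasDerivAt V (log (x ^ 2 / (x ^ 2 - 1)) - 2 / (x ^ 2 - 1)) x := by
  have hsub : x ^ 2 - 1 ≠ 0 := sub_ne_zero.mpr hx2
  have hratio : HasDerivAt (fun y : ℝ => y ^ 2 / (y ^ 2 - 1)) (-(2 * x) / (x ^ 2 - 1) ^ 2) x :=
    ((hasDerivAt_pow 2 x).fun_div ((hasDerivAt_pow 2 x).sub_const 1) hsub).congr_deriv
      (by field_simp; ring)
  refine ((hasDerivAt_id' x).fun_mul (hratio.log (by positivity))).congr_deriv ?_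
  field_simp
  ring

lemma hasDerivAt_log_div_sub_one {x : ℝ} (hx : x ≠ 0) (hx1 : x ≠ 1) :
    HasDerivAt (fun y : ℝ => log (y / (y - 1))) (-(1 / (x * (x - 1)))) x := by
  have hsub : x - 1 ≠ 0 := sub_ne_zero.mpr hx1
  have hratio : HasDerivAt (fun y : ℝ => y / (y - 1)) (-1 / (x - 1) ^ 2) x :=
    ((hasDerivAt_id' x).fun_div ((hasDerivAt_id' x).sub_const 1) hsub).congr_deriv (by ring)
  refine (hratio.log (div_ne_zero hx hsub)).congr_deriv ?_
  field_simp

lemma inv_sq_lt_log_sq_div_sq_sub_one {x : ℝ} (hx : 1 < x) :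
    (x ^ 2)⁻¹ < log (x ^ 2 / (x ^ 2 - 1)) := by
  have hx2 : 0 < x ^ 2 := by positivity
  have hpos : 0 < 1 - (x ^ 2)⁻¹ := sub_pos.mpr (inv_lt_one_of_one_lt₀ (one_lt_pow₀ hx two_ne_zero))
  have hne : 1 - (x ^ 2)⁻¹ ≠ 1 := by simp [hx2.ne']
  have hinv : x ^ 2 / (x ^ 2 - 1) = (1 - (x ^ 2)⁻¹)⁻¹ := by
    field_simp
  rw [hinv, log_inv]
  linarith [log_lt_sub_one_of_pos hpos hne]

lemma strictMonoOn_V_sub_log : StrictMonoOn (fun p => V p - log (p / (p - 1))) (Ioi 1) := by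
  have hderiv : ∀ x ∈ Ioi (1 : ℝ), HasDerivAt (fun p => V p - log (p / (p - 1)))
      (log (x ^ 2 / (x ^ 2 - 1)) - 2 / (x ^ 2 - 1) - -(1 / (x * (x - 1)))) x := by
    intro x (hx : 1 < x)
    exact (hasDerivAt_V (by positivity) (one_lt_pow₀ hx two_ne_zero).ne').sub
      (hasDerivAt_log_div_sub_one (by positivity) hx.ne')
  refine strictMonoOn_of_hasDerivWithinAt_pos (convex_Ioi 1)
    (fun x hx => (hderiv x hx).continuousAt.continuousWithinAt)
    (fun x hx => (hderiv x (interior_subset hx)).hasDerivWithinAt) ?_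
  rw [interior_Ioi]
  intro x (hx : 1 < x)
  have hx0 : 0 < x := by linarith
  have hx1 : x - 1 ≠ 0 := sub_ne_zero.mpr hx.ne'
  have hx2 : x ^ 2 - 1 ≠ 0 := sub_ne_zero.mpr (one_lt_pow₀ hx two_ne_zero).ne'
  have hrational : (x ^ 2)⁻¹ - 2 / (x ^ 2 - 1) + 1 / (x * (x - 1)) = 1 / (x ^ 2 * (x + 1)) := by
    field_simp
    ring
  have : 0 < 1 / (x ^ 2 * (x + 1)) := by positivity
  linarith [inv_sq_lt_log_sq_div_sq_sub_one hx]

theorem stmt_4 (p p' : ℝ) (hp : 1 < p) (hpp' : p < p') :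
    V p - V p' < Real.log (p / (p - 1)) - Real.log (p' / (p' - 1)) := by
  have h := strictMonoOn_V_sub_log (mem_Ioi.mpr hp) (mem_Ioi.mpr (hp.trans hpp')) hpp'
  simp only at h
  linarith
end

section
/- For p > 1, the function G'(p) = ln(1 + 1/(p²−1)) − 1/(p²+p) is positive. -/
open Real

theorem Real.one_sub_inv_lt_log {x : ℝ} (hx : 0 < x) (hx1 : x ≠ 1) : 1 - x⁻¹ < log x := by
  have h := log_lt_sub_one_of_pos (inv_pos.mpr hx) (inv_ne_one.mpr hx1)
  rw [log_inv] at h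
  linarith

theorem Real.inv_lt_log_one_add_one_div_sub_one {x : ℝ} (hx : 1 < x) :
    x⁻¹ < log (1 + 1 / (x - 1)) := by
  have hx0 : 0 < x - 1 := sub_pos.mpr hx
  have hinv : 1 - (1 + 1 / (x - 1))⁻¹ = x⁻¹ := by
    field_simp
    ring
  rw [← hinv]
  exact one_sub_inv_lt_log (by positivity) (by simp [hx0.ne'])

theorem stmt_7 (p : ℝ) (hp : 1 < p) :
    0 < Real.log (1 + 1 / (p ^ 2 - 1)) - 1 / (p ^ 2 + p) := by
  have hp2 : 1 < p ^ 2 := one_lt_pow₀ hp two_ne_zero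
  have hfrac : 1 / (p ^ 2 + p) < (p ^ 2)⁻¹ := by
    rw [one_div]
    exact inv_strictAnti₀ (by positivity) (by linarith)
  linarith [inv_lt_log_one_add_one_div_sub_one hp2]
end

section
/- Let a, b, z₁, …, z_m be nonnegative reals with a + b = z₁ + ⋯ + z_m and a ≤ z_m ≤ b. Then ln(1+b) + ln(1+a) ≤ ∑_{i=1}^m ln(1+z_i). -/
/-!
Taking logarithms, the claim is `(1 + a)(1 + b) ≤ ∏ (1 + zᵢ)`. Replacing the pair `(a, b)` by
`(z_m, a + b - z_m)`, which has the same sum, does not decrease the product, since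
`(1 + z)(1 + (a + b - z)) - (1 + a)(1 + b) = (z - a)(b - z) ≥ 0`; and `a + b - z_m` is the sum of
the remaining `zᵢ ≥ 0`, for which `1 + ∑ xᵢ ≤ ∏ (1 + xᵢ)`.
-/

open Real Finset

theorem Finset.one_add_sum_le_prod_one_add {ι R : Type*} [CommSemiring R] [PartialOrder R]
    [IsOrderedRing R] (s : Finset ι) {f : ι → R} (hf : ∀ i ∈ s, 0 ≤ f i) :
    1 + ∑ i ∈ s, f i ≤ ∏ i ∈ s, (1 + f i) := by
  induction s using Finset.cons_induction with
  | empty => simp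
  | cons j s hj ih =>
    rw [sum_cons, prod_cons]
    have hfj : 0 ≤ f j := hf j (mem_cons_self j s)
    have hs : ∀ i ∈ s, 0 ≤ f i := fun i hi => hf i (mem_cons_of_mem hi)
    calc 1 + (f j + ∑ i ∈ s, f i)
        ≤ 1 + (f j + ∑ i ∈ s, f i) + f j * ∑ i ∈ s, f i :=
          le_add_of_nonneg_right (mul_nonneg hfj (sum_nonneg hs))
      _ = (1 + f j) * (1 + ∑ i ∈ s, f i) := by ring
      _ ≤ (1 + f j) * ∏ i ∈ s, (1 + f i) :=
          mul_le_mul_of_nonneg_left (ih hs) (add_nonneg zero_le_one hfj)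

theorem Real.log_one_add_sum_le_sum_log_one_add {ι : Type*} (s : Finset ι) {f : ι → ℝ}
    (hf : ∀ i ∈ s, 0 ≤ f i) :
    log (1 + ∑ i ∈ s, f i) ≤ ∑ i ∈ s, log (1 + f i) := by
  rw [← log_prod fun i hi => by linarith [hf i hi]]
  exact log_le_log (by linarith [sum_nonneg hf]) (one_add_sum_le_prod_one_add s hf)

theorem Real.log_one_add_add_log_one_add_le {a b z : ℝ} (ha : 0 ≤ a) (haz : a ≤ z) (hzb : z ≤ b) :
    log (1 + b) + log (1 + a) ≤ log (1 + z) + log (1 + (a + b - z)) := by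
  rw [← log_mul (by linarith) (by linarith), ← log_mul (by linarith) (by linarith)]
  apply log_le_log (by nlinarith)
  nlinarith [mul_nonneg (sub_nonneg.2 haz) (sub_nonneg.2 hzb)]

theorem stmt_8_general (m : ℕ) (a b : ℝ) (z : Fin (m + 1) → ℝ)
    (ha : 0 ≤ a) (hz : ∀ i, 0 ≤ z i)
    (hsum : a + b = ∑ i, z i)
    (haz : a ≤ z (Fin.last m)) (hzb : z (Fin.last m) ≤ b) :
    Real.log (1 + b) + Real.log (1 + a) ≤ ∑ i, Real.log (1 + z i) := by
  have hrest : a + b - z (Fin.last m) = ∑ i : Fin m, z i.castSucc := by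
    rw [hsum, Fin.sum_univ_castSucc, add_sub_cancel_right]
  calc log (1 + b) + log (1 + a)
      ≤ log (1 + z (Fin.last m)) + log (1 + (a + b - z (Fin.last m))) :=
        log_one_add_add_log_one_add_le ha haz hzb
    _ ≤ log (1 + z (Fin.last m)) + ∑ i : Fin m, log (1 + z i.castSucc) := by
        rw [hrest]
        gcongr
        exact log_one_add_sum_le_sum_log_one_add _ fun i _ => hz _
    _ = ∑ i, log (1 + z i) := by rw [Fin.sum_univ_castSucc, add_comm]

theorem stmt_8 (m : ℕ) (a b : ℝ) (z : Fin (m + 1) → ℝ)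
    (ha : 0 ≤ a) (hb : 0 ≤ b) (hz : ∀ i, 0 ≤ z i)
    (hsum : a + b = ∑ i, z i)
    (haz : a ≤ z (Fin.last m)) (hzb : z (Fin.last m) ≤ b) :
    Real.log (1 + b) + Real.log (1 + a) ≤ ∑ i, Real.log (1 + z i) :=
  stmt_8_general m a b z ha hz hsum haz hzb
end

section
/- Let a, b, z₁, …, z_m be nonnegative reals with a + b = z₁ + ⋯ + z_m and a ≤ z_m ≤ b. Then (1+a)(1+b) ≤ ∏_{i=1}^m (1+z_i). -/
open Finset

lemma aux_one_add {ι : Type*} (s : Finset ι) (f : ι → ℝ) (hf : ∀ i ∈ s, 0 ≤ f i) :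
    1 + ∑ i ∈ s, f i ≤ ∏ i ∈ s, (1 + f i) := by
  induction s using Finset.cons_induction with
  | empty => simp
  | cons a s ha ih =>
    rw [Finset.sum_cons, Finset.prod_cons]
    have h0 : 0 ≤ f a := hf a (Finset.mem_cons_self a s)
    have hs : ∀ i ∈ s, 0 ≤ f i := fun i hi => hf i (Finset.mem_cons_of_mem hi)
    have hsum : 0 ≤ ∑ i ∈ s, f i := Finset.sum_nonneg hs
    calc 1 + (f a + ∑ i ∈ s, f i) ≤ (1 + f a) * (1 + ∑ i ∈ s, f i) := by nlinarith
    _ ≤ (1 + f a) * ∏ i ∈ s, (1 + f i) := by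
        apply mul_le_mul_of_nonneg_left (ih hs); linarith

theorem stmt_9 (m : ℕ) (a b : ℝ) (z : Fin (m + 1) → ℝ)
    (ha : 0 ≤ a) (hb : 0 ≤ b) (hz : ∀ i, 0 ≤ z i)
    (hsum : a + b = ∑ i, z i)
    (haz : a ≤ z (Fin.last m)) (hzb : z (Fin.last m) ≤ b) :
    (1 + a) * (1 + b) ≤ ∏ i, (1 + z i) := by
  rw [Fin.prod_univ_castSucc]
  rw [Fin.sum_univ_castSucc] at hsum
  set c := z (Fin.last m) with hc
  set S := ∑ i : Fin m, z i.castSucc with hS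
  have h1 : 1 + S ≤ ∏ i : Fin m, (1 + z i.castSucc) :=
    aux_one_add _ _ (fun i _ => hz _)
  have hc0 : 0 ≤ c := hz _
  have : (1 + a) * (1 + b) ≤ (1 + S) * (1 + c) := by nlinarith
  calc (1 + a) * (1 + b) ≤ (1 + S) * (1 + c) := this
  _ ≤ (∏ i : Fin m, (1 + z i.castSucc)) * (1 + c) := by
      apply mul_le_mul_of_nonneg_right h1; linarith
end

section
/- For any p' > p > 1, letting q = (exp(V(p) − V(p')) − 1)/p, one has q − (Q(p) − Q(p')) ≥ p·q − (V(p) − V(p')) ≥ 0, where V(p) = p·ln(p²/(p²−1)) and Q(p) = ∫_p^∞ (−V'(v)/v) dv. -/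
open Real Set MeasureTheory

noncomputable def Q (p : ℝ) : ℝ := ∫ v in Set.Ioi p, -(deriv V v) / v

/-!
Write `h = -V'`, which is nonnegative, so that `A := V p - V p' = ∫_p^{p'} h` and
`B := Q p - Q p' = ∫_p^{p'} h v / v`. The second inequality is `e^A - 1 - A ≥ 0`; the first is
`(1 - 1/p)(e^A - 1) ≤ A - B = ∫_p^{p'} h v (1 - 1/v)`. Since
`e^A - 1 = ∫_p^{p'} h s e^{V p - V s} ds`, it suffices that
`(1 - 1/p) e^{V p - V s} ≤ 1 - 1/s` for `p ≤ s`, i.e. that `V t + log (1 - 1/t)` is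
nondecreasing; its derivative is `1/(t(t-1)) - h t ≥ 0`, by `log x ≥ 1 - 1/x`.
-/

theorem mul_exp_integral_sub_one_le_integral_mul {f w : ℝ → ℝ} {a b c : ℝ} (hab : a ≤ b)
    (hf : ContinuousOn f (Icc a b)) (hw : ContinuousOn w (Icc a b))
    (hf0 : ∀ x ∈ Icc a b, 0 ≤ f x)
    (hcw : ∀ x ∈ Icc a b, c * exp (∫ t in a..x, f t) ≤ w x) :
    c * (exp (∫ t in a..b, f t) - 1) ≤ ∫ x in a..b, f x * w x := by
  set F : ℝ → ℝ := fun x => ∫ t in a..x, f t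
  have hFc : ContinuousOn F (Icc a b) := by
    simpa [uIcc_of_le hab] using intervalIntegral.continuousOn_primitive_interval'
      (hf.intervalIntegrable_of_Icc hab) left_mem_uIcc
  have hFd : ∀ x ∈ Ioo a b, HasDerivAt F (f x) x := fun x hx =>
    intervalIntegral.integral_hasDerivAt_right
      ((hf.mono (Icc_subset_Icc_right hx.2.le)).intervalIntegrable_of_Icc hx.1.le)
      ((hf.mono Ioo_subset_Icc_self).stronglyMeasurableAtFilter isOpen_Ioo x hx)
      (hf.continuousAt (Icc_mem_nhds hx.1 hx.2))
  have hexpF : ContinuousOn (fun x => exp (F x)) (Icc a b) :=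
    continuousOn_exp.comp hFc (mapsTo_univ _ _)
  have hexp : ∫ x in a..b, f x * exp (F x) = exp (F b) - 1 := by
    rw [intervalIntegral.integral_eq_sub_of_hasDerivAt_of_le (f' := fun x => f x * exp (F x)) hab
      hexpF (fun x hx => by simpa only [mul_comm] using (hFd x hx).exp)
      ((hf.mul hexpF).intervalIntegrable_of_Icc hab)]
    simp [F]
  calc c * (exp (F b) - 1) = ∫ x in a..b, c * (f x * exp (F x)) := by
        rw [intervalIntegral.integral_const_mul, hexp]
    _ ≤ ∫ x in a..b, f x * w x := by
        refine intervalIntegral.integral_mono_on hab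
          ((continuousOn_const.mul (hf.mul hexpF)).intervalIntegrable_of_Icc hab)
          ((hf.mul hw).intervalIntegrable_of_Icc hab) fun x hx => ?_
        rw [mul_left_comm]
        exact mul_le_mul_of_nonneg_left (hcw x hx) (hf0 x hx)

noncomputable def negDerivV (v : ℝ) : ℝ := 2 / (v ^ 2 - 1) - log (v ^ 2 / (v ^ 2 - 1))

theorem hasDerivAt_V_s11 {v : ℝ} (hv : 1 < v) : HasDerivAt V (-negDerivV v) v := by
  have hv2 : v ^ 2 - 1 ≠ 0 := by nlinarith
  have hquot := (hasDerivAt_pow 2 v).fun_div ((hasDerivAt_pow 2 v).sub_const 1) hv2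
  refine ((hasDerivAt_id' v).fun_mul (hquot.log (by positivity))).congr_deriv ?_
  rw [negDerivV]; field_simp; ring

theorem negDerivV_nonneg {v : ℝ} (hv : 1 < v) : 0 ≤ negDerivV v := by
  have h1 : 0 < v ^ 2 - 1 := by nlinarith
  have hlog := log_le_sub_one_of_pos (show 0 < v ^ 2 / (v ^ 2 - 1) by positivity)
  have hbound : v ^ 2 / (v ^ 2 - 1) - 1 ≤ 2 / (v ^ 2 - 1) := by
    rw [div_sub_one h1.ne', div_le_div_iff_of_pos_right h1]; linarith
  rw [negDerivV]; linarith

theorem negDerivV_le {v : ℝ} (hv : 1 < v) : negDerivV v ≤ 1 / (v * (v - 1)) := by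
  have h1 : 0 < v ^ 2 - 1 := by nlinarith
  have h2 : 0 < v - 1 := by linarith
  have hlog := one_sub_inv_le_log_of_pos (show 0 < v ^ 2 / (v ^ 2 - 1) by positivity)
  have hbound : 2 / (v ^ 2 - 1) - (1 - (v ^ 2 / (v ^ 2 - 1))⁻¹) ≤ 1 / (v * (v - 1)) := by
    rw [show 2 / (v ^ 2 - 1) - (1 - (v ^ 2 / (v ^ 2 - 1))⁻¹)
        = (v ^ 2 + 1) / (v ^ 2 * (v ^ 2 - 1)) by field_simp; ring,
      div_le_div_iff₀ (by positivity) (by positivity)]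
    nlinarith [mul_pos (mul_pos (by linarith : (0:ℝ) < v) h2) h2]
  rw [negDerivV]; linarith

theorem continuousOn_negDerivV : ContinuousOn negDerivV (Ioi 1) := by
  have h : ∀ v ∈ Ioi (1 : ℝ), v ^ 2 - 1 ≠ 0 := fun v hv => by
    simp only [mem_Ioi] at hv; nlinarith
  refine (continuousOn_const.div (by fun_prop) h).sub (ContinuousOn.log
    ((continuousOn_pow 2).div (by fun_prop) h) fun v hv => div_ne_zero ?_ (h v hv))
  simp only [mem_Ioi] at hv; positivity

theorem integrableOn_negDerivV_div {a : ℝ} (ha : 1 < a) :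
    IntegrableOn (fun v => negDerivV v / v) (Ioi a) := by
  refine Integrable.mono' ((integrableOn_Ioi_rpow_of_lt (by norm_num : (-2 : ℝ) < -1)
    (by linarith : (0 : ℝ) < a)).const_mul (a - 1)⁻¹) ?_ ?_
  · exact ((continuousOn_negDerivV.mono (Ioi_subset_Ioi ha.le)).div continuousOn_id
      fun v hv => (lt_trans (by linarith) hv).ne').aestronglyMeasurable measurableSet_Ioi
  · filter_upwards [ae_restrict_mem measurableSet_Ioi] with v hv
    have hv1 : 1 < v := ha.trans hv
    have hv0 : 0 < v := by linarith
    rw [norm_of_nonneg (div_nonneg (negDerivV_nonneg hv1) hv0.le), rpow_neg hv0.le,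
      rpow_two]
    calc negDerivV v / v ≤ 1 / (v * (v - 1)) / v := by
          gcongr; exact negDerivV_le hv1
      _ ≤ (a - 1)⁻¹ * (v ^ 2)⁻¹ := by
          rw [div_div, one_div, ← mul_inv]
          have hva : a - 1 < v - 1 := by linarith [mem_Ioi.mp hv]
          exact inv_anti₀ (mul_pos (by linarith) (by positivity)) (by nlinarith)

theorem Q_eq_integral_negDerivV_div {a : ℝ} (ha : 1 < a) :
    Q a = ∫ v in Ioi a, negDerivV v / v := by
  refine setIntegral_congr_fun measurableSet_Ioi fun v hv => ?_
  rw [(hasDerivAt_V_s11 (ha.trans hv)).deriv, neg_neg]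

theorem Q_sub_Q {a b : ℝ} (ha : 1 < a) (hb : 1 < b) :
    Q a - Q b = ∫ v in a..b, negDerivV v / v := by
  rw [Q_eq_integral_negDerivV_div ha, Q_eq_integral_negDerivV_div hb]
  exact intervalIntegral.integral_Ioi_sub_Ioi' (integrableOn_negDerivV_div ha)
    (integrableOn_negDerivV_div hb)

theorem integral_negDerivV {a b : ℝ} (ha : 1 < a) (hb : 1 < b) :
    ∫ v in a..b, negDerivV v = V a - V b := by
  have hsub : uIcc a b ⊆ Ioi 1 := ordConnected_Ioi.uIcc_subset ha hb
  have := intervalIntegral.integral_eq_sub_of_hasDerivAt (fun x hx => hasDerivAt_V_s11 (hsub hx))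
    ((continuousOn_negDerivV.mono hsub).neg.intervalIntegrable)
  rw [intervalIntegral.integral_neg] at this
  linarith

theorem monotoneOn_V_add_log_one_sub_inv :
    MonotoneOn (fun t => V t + log (1 - t⁻¹)) (Ioi 1) := by
  have hderiv : ∀ t ∈ Ioi (1 : ℝ), HasDerivAt (fun t => V t + log (1 - t⁻¹))
      (-negDerivV t + 1 / (t * (t - 1))) t := by
    intro t ht
    have ht0 : t ≠ 0 := by linarith [mem_Ioi.mp ht]
    have ht1 : t - 1 ≠ 0 := by linarith [mem_Ioi.mp ht]
    have hpos : 0 < 1 - t⁻¹ := sub_pos.mpr (inv_lt_one_of_one_lt₀ ht)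
    refine ((hasDerivAt_V_s11 ht).add (((hasDerivAt_inv ht0).const_sub 1).log hpos.ne')).congr_deriv ?_
    field_simp
  refine monotoneOn_of_deriv_nonneg (convex_Ioi 1)
    (fun t ht => (hderiv t ht).continuousAt.continuousWithinAt)
    (fun t ht => (hderiv t (interior_subset ht)).differentiableAt.differentiableWithinAt)
    fun t ht => ?_
  rw [interior_Ioi] at ht
  rw [(hderiv t ht).deriv]
  linarith [negDerivV_le ht]

theorem one_sub_inv_mul_exp_V_sub_V_le {p s : ℝ} (hp : 1 < p) (hps : p ≤ s) :
    (1 - p⁻¹) * exp (V p - V s) ≤ 1 - s⁻¹ := by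
  have hmono := exp_le_exp.mpr (monotoneOn_V_add_log_one_sub_inv hp (hp.trans_le hps) hps)
  have h1 : 0 < 1 - p⁻¹ := sub_pos.mpr (inv_lt_one_of_one_lt₀ hp)
  have h2 : 0 < 1 - s⁻¹ := sub_pos.mpr (inv_lt_one_of_one_lt₀ (hp.trans_le hps))
  rw [exp_add, exp_add, exp_log h1, exp_log h2] at hmono
  rw [exp_sub, mul_div_assoc', div_le_iff₀ (exp_pos _)]
  linarith

theorem integral_negDerivV_mul_one_sub_inv {a b : ℝ} (ha : 1 < a) (hb : 1 < b) :
    ∫ v in a..b, negDerivV v * (1 - v⁻¹) = (V a - V b) - (Q a - Q b) := by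
  have hsub : uIcc a b ⊆ Ioi 1 := ordConnected_Ioi.uIcc_subset ha hb
  have hcont := continuousOn_negDerivV.mono hsub
  rw [← integral_negDerivV ha hb, Q_sub_Q ha hb,
    ← intervalIntegral.integral_sub (g := fun v => negDerivV v / v)
    hcont.intervalIntegrable (hcont.div continuousOn_id fun x hx =>
      (zero_lt_one.trans (hsub hx)).ne').intervalIntegrable]
  simp only [mul_one_sub, div_eq_mul_inv]

theorem one_sub_inv_mul_exp_sub_one_le {p p' : ℝ} (hp : 1 < p) (hpp' : p ≤ p') :
    (1 - p⁻¹) * (exp (V p - V p') - 1) ≤ (V p - V p') - (Q p - Q p') := by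
  have hIcc : Icc p p' ⊆ Ioi 1 := fun x hx => hp.trans_le hx.1
  have key := mul_exp_integral_sub_one_le_integral_mul (w := fun v => 1 - v⁻¹) hpp'
    (continuousOn_negDerivV.mono hIcc)
    (continuousOn_const.sub
      (continuousOn_inv₀.mono fun x hx => (zero_lt_one.trans (hIcc hx)).ne'))
    (fun x hx => negDerivV_nonneg (hIcc hx)) fun x hx => by
      rw [integral_negDerivV hp (hIcc hx)]
      exact one_sub_inv_mul_exp_V_sub_V_le hp hx.1
  rwa [integral_negDerivV hp (hp.trans_le hpp'),
    integral_negDerivV_mul_one_sub_inv hp (hp.trans_le hpp')] at key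

theorem stmt_11 (p p' : ℝ) (hp : 1 < p) (hpp' : p < p') :
    (Real.exp (V p - V p') - 1) / p - (Q p - Q p') ≥
      p * ((Real.exp (V p - V p') - 1) / p) - (V p - V p') ∧
    p * ((Real.exp (V p - V p') - 1) / p) - (V p - V p') ≥ 0 := by
  have key := one_sub_inv_mul_exp_sub_one_le hp hpp'.le
  rw [mul_div_cancel₀ _ (by positivity : p ≠ 0), div_eq_inv_mul]
  exact ⟨by linarith, by linarith [add_one_le_exp (V p - V p')]⟩
end

section
/- The function x ↦ ln(1 + 1/(x²−1)) − 1/(x²+x) tends to 0 as x → ∞ and is strictly decreasing on (1,∞); hence it is strictly positive on (1,∞). -/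
open Real Set Filter Topology

/-!
For `x > 1` we have `1 + 1/(x² - 1) = x²/(x² - 1)`, so the first term has derivative
`-2/(x(x² - 1))`, while `1/(x² + x)` has derivative `-(2x + 1)/(x²(x + 1)²)`. The difference
of the two is negative because `(2x + 1)(x - 1) < 2x(x + 1)`. Both terms tend to `0`, and a
strictly decreasing function lies strictly above its limit at infinity.
-/

theorem StrictAntiOn.lt_of_tendsto_atTop {α β : Type*} [LinearOrder α] [NoMaxOrder α]
    [TopologicalSpace β] [Preorder β] [ClosedIicTopology β] {f : α → β} {a : α} {l : β}
    (hf : StrictAntiOn f (Ioi a)) (hlim : Tendsto f atTop (𝓝 l)) {x : α} (hx : a < x) :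
    l < f x := by
  have : Nonempty α := ⟨a⟩
  obtain ⟨y, hxy⟩ := exists_gt x
  have hly : l ≤ f y := le_of_tendsto hlim <| by
    filter_upwards [eventually_gt_atTop y] with z hyz
    exact (hf (hx.trans hxy) (hx.trans (hxy.trans hyz)) hyz).le
  exact hly.trans_lt (hf hx (hx.trans hxy) hxy)

theorem tendsto_log_one_add_one_div_sq_sub_one :
    Tendsto (fun x : ℝ => log (1 + 1 / (x ^ 2 - 1))) atTop (𝓝 0) := by
  have hsq : Tendsto (fun x : ℝ => x ^ 2 - 1) atTop atTop :=
    tendsto_atTop_add_const_right atTop (-1) (tendsto_pow_atTop two_ne_zero)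
  have hinv : Tendsto (fun x : ℝ => 1 + 1 / (x ^ 2 - 1)) atTop (𝓝 1) := by
    simpa only [one_div, add_zero, Pi.inv_apply] using tendsto_const_nhds.add hsq.inv_tendsto_atTop
  simpa only [log_one, Function.comp_def] using (continuousAt_log one_ne_zero).tendsto.comp hinv

theorem tendsto_one_div_sq_add_self :
    Tendsto (fun x : ℝ => 1 / (x ^ 2 + x)) atTop (𝓝 0) := by
  simpa only [one_div, Pi.inv_def, id] using
    ((tendsto_pow_atTop two_ne_zero).atTop_add_atTop tendsto_id).inv_tendsto_atTop

theorem hasDerivAt_log_one_add_one_div_sq_sub_one {x : ℝ} (hx : x ≠ 0) (hsq : x ^ 2 - 1 ≠ 0) :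
    HasDerivAt (fun x : ℝ => log (1 + 1 / (x ^ 2 - 1))) (-2 / (x * (x ^ 2 - 1))) x := by
  have hinner : HasDerivAt (fun x : ℝ => 1 + 1 / (x ^ 2 - 1)) (-(2 * x) / (x ^ 2 - 1) ^ 2) x := by
    simpa using (((hasDerivAt_pow 2 x).sub_const 1).inv hsq).const_add 1
  have hne : 1 + 1 / (x ^ 2 - 1) ≠ 0 := by
    rw [show 1 + 1 / (x ^ 2 - 1) = x ^ 2 / (x ^ 2 - 1) by field_simp; ring]
    exact div_ne_zero (pow_ne_zero 2 hx) hsq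
  convert hinner.log hne using 1
  field_simp
  ring

theorem hasDerivAt_one_div_sq_add_self {x : ℝ} (hx : x ^ 2 + x ≠ 0) :
    HasDerivAt (fun x : ℝ => 1 / (x ^ 2 + x)) (-(2 * x + 1) / (x ^ 2 + x) ^ 2) x := by
  simpa [Pi.inv_def] using ((hasDerivAt_pow 2 x).add (hasDerivAt_id x)).inv hx

theorem two_mul_add_one_div_sq_add_self_sq_lt {x : ℝ} (hx : 1 < x) :
    (2 * x + 1) / (x ^ 2 + x) ^ 2 < 2 / (x * (x ^ 2 - 1)) := by
  have hx0 : 0 < x := by linarith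
  have hsq : 0 < x ^ 2 - 1 := by nlinarith
  rw [div_lt_div_iff₀ (by positivity) (by positivity)]
  nlinarith [mul_pos hx0 hsq]

theorem strictAntiOn_log_one_add_one_div_sq_sub_one_sub_one_div_sq_add_self :
    StrictAntiOn (fun x : ℝ => log (1 + 1 / (x ^ 2 - 1)) - 1 / (x ^ 2 + x)) (Ioi 1) := by
  have hderiv : ∀ x ∈ Ioi (1 : ℝ), HasDerivAt
      (fun x : ℝ => log (1 + 1 / (x ^ 2 - 1)) - 1 / (x ^ 2 + x))
      (-2 / (x * (x ^ 2 - 1)) - -(2 * x + 1) / (x ^ 2 + x) ^ 2) x := fun x (hx : 1 < x) =>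
    (hasDerivAt_log_one_add_one_div_sq_sub_one (by positivity) (by nlinarith)).sub
      (hasDerivAt_one_div_sq_add_self (by nlinarith))
  refine strictAntiOn_of_deriv_neg (convex_Ioi 1)
    (fun x hx => (hderiv x hx).continuousAt.continuousWithinAt) fun x hx => ?_
  rw [interior_Ioi] at hx
  rw [(hderiv x hx).deriv, neg_div, neg_div]
  linarith [two_mul_add_one_div_sq_add_self_sq_lt hx]

theorem stmt_17 :
    Filter.Tendsto (fun x : ℝ => Real.log (1 + 1 / (x ^ 2 - 1)) - 1 / (x ^ 2 + x))
      Filter.atTop (nhds 0) ∧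
    StrictAntiOn (fun x : ℝ => Real.log (1 + 1 / (x ^ 2 - 1)) - 1 / (x ^ 2 + x))
      (Set.Ioi 1) ∧
    (∀ x : ℝ, 1 < x → 0 < Real.log (1 + 1 / (x ^ 2 - 1)) - 1 / (x ^ 2 + x)) := by
  have hlim : Tendsto (fun x : ℝ => log (1 + 1 / (x ^ 2 - 1)) - 1 / (x ^ 2 + x)) atTop (𝓝 0) := by
    simpa only [sub_zero] using
      tendsto_log_one_add_one_div_sq_sub_one.sub tendsto_one_div_sq_add_self
  have hanti := strictAntiOn_log_one_add_one_div_sq_sub_one_sub_one_div_sq_add_self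
  exact ⟨hlim, hanti, fun x hx => hanti.lt_of_tendsto_atTop hlim hx⟩
end
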